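/- Let g ≥ 2. There exists a constant C > 0 depending only on g such that for every positive definite symmetric half-integral g×g matrix T there exists U ∈ GL_g(ℤ) with T[U]|_{g−1} ≤ C · det(2T)^{1 − 1/g}, where T[U] := Uᵀ T U and T[U]|_{g−1} denotes the determinant of the leading (g−1)×(g−1) submatrix of T[U]. In particular, the minimum m_{g−1}(T) := min{ T[U]|_{g−1} : U ∈ GL_g(ℤ) } satisfies m_{g−1}(T) ≤ C · det(2T)^{1 − 1/g}. -/

import Mathlib

/-- A `g×g` rational matrix is positive definite symmetric half-integral if it is
symmetric, positive definite, `2T` has integer entries, and the diagonal entries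
of `T` are integers (i.e. the diagonal of `2T` is even). -/
def IsPDHalfIntegral {g : ℕ} (T : Matrix (Fin g) (Fin g) ℚ) : Prop :=
  T.IsSymm ∧ (∀ x : Fin g → ℚ, x ≠ 0 → 0 < dotProduct x (T.mulVec x)) ∧
    (∀ i j, ∃ z : ℤ, 2 * T i j = (z : ℚ)) ∧ (∀ i, ∃ z : ℤ, T i i = (z : ℚ))

/-- The leading `(g-1)×(g-1)` minor `T[U]|_{g-1}` of `T[U] := Uᵀ T U`. -/
def leadingMinor {g : ℕ} (T : Matrix (Fin g) (Fin g) ℚ) (U : Matrix (Fin g) (Fin g) ℤ) : ℚ :=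
  Matrix.det (Matrix.submatrix
    ((U.map (fun z : ℤ => (z : ℚ))).transpose * T * U.map (fun z : ℤ => (z : ℚ)))
    (Fin.castLE (Nat.sub_le g 1)) (Fin.castLE (Nat.sub_le g 1)))

section AuxProof

open Matrix MeasureTheory Real Module
open scoped MatrixOrder

lemma mink_aux (g : ℕ) (hg : 0 < g) (Q : Matrix (Fin g) (Fin g) ℝ) (hQ : Q.PosDef) :
    ∃ v : Fin g → ℤ, v ≠ 0 ∧
      (fun i => (v i : ℝ)) ⬝ᵥ Q.mulVec (fun i => (v i : ℝ)) ≤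
        (9 * (Real.sqrt π ^ g / Real.Gamma (g / 2 + 1)) ^ (-(2 / (g:ℝ)))) * Q.det ^ (1/(g:ℝ)) := by
  haveI : Nonempty (Fin g) := Fin.pos_iff_nonempty.mp hg
  classical
  set κ : ℝ := Real.sqrt π ^ g / Real.Gamma (g / 2 + 1) with hκdef
  have hκ : 0 < κ := by
    apply div_pos (pow_pos (Real.sqrt_pos.mpr Real.pi_pos) g)
    exact Real.Gamma_pos_of_pos (by positivity)
  set A : Matrix (Fin g) (Fin g) ℝ := CFC.sqrt Q with hAdef
  have hAA : A * A = Q := CFC.sqrt_mul_sqrt_self Q hQ.posSemidef.nonneg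
  have hQdet : 0 < Q.det := hQ.det_pos
  have hdet2 : A.det * A.det = Q.det := by rw [← det_mul, hAA]
  have hAdet : A.det ≠ 0 := by
    intro h; rw [h, zero_mul] at hdet2; exact hQdet.ne' hdet2.symm
  set δ : ℝ := |A.det| with hδdef
  have hδ : 0 < δ := abs_pos.mpr hAdet
  have hδ2 : δ ^ 2 = Q.det := by rw [sq_abs, sq, hdet2]
  set r : ℝ := 3 * (δ / κ) ^ (1 / (g:ℝ)) with hrdef
  have hr : 0 < r := by positivity
  set L : (Fin g → ℝ) →ₗ[ℝ] EuclideanSpace ℝ (Fin g) :=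
    (WithLp.linearEquiv 2 ℝ (Fin g → ℝ)).symm.toLinearMap ∘ₗ A.mulVecLin with hL
  set s : Set (Fin g → ℝ) := L ⁻¹' (Metric.closedBall 0 r) with hs
  have hconv : Convex ℝ s := (convex_closedBall _ _).linear_preimage L
  have hsymm : ∀ x ∈ s, -x ∈ s := by
    intro x hx
    simp only [hs, Set.mem_preimage, map_neg, Metric.mem_closedBall, dist_zero_right,
      norm_neg] at *
    exact hx
  have hdetlin : LinearMap.det (A.mulVecLin) ≠ 0 := by
    rw [show A.mulVecLin = Matrix.toLin' A from rfl, LinearMap.det_toLin']; exact hAdet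
  have hvol : volume s = ENNReal.ofReal (δ⁻¹ * (r ^ g * κ)) := by
    have h1 : s = A.mulVecLin ⁻¹'
        ((MeasurableEquiv.toLp 2 (Fin g → ℝ)) ⁻¹' (Metric.closedBall 0 r)) := rfl
    rw [h1, Measure.addHaar_preimage_linearMap volume hdetlin,
      ← MeasurableEquiv.symm_symm (MeasurableEquiv.toLp 2 (Fin g → ℝ)),
      ((EuclideanSpace.volume_preserving_symm_measurableEquiv_toLp (Fin g)).symm).measure_preimage
        measurableSet_closedBall.nullMeasurableSet,
      EuclideanSpace.volume_closedBall (Fin g) 0 r]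
    rw [show A.mulVecLin = Matrix.toLin' A from rfl, LinearMap.det_toLin']
    rw [abs_inv, Fintype.card_fin, ← hδdef, ← hκdef, ← ENNReal.ofReal_pow hr.le,
      ← ENNReal.ofReal_mul (by positivity : (0:ℝ) ≤ r ^ g),
      ← ENNReal.ofReal_mul (by positivity : (0:ℝ) ≤ δ⁻¹)]
  -- fundamental domain
  set b : Basis (Fin g) ℝ (Fin g → ℝ) := Pi.basisFun ℝ (Fin g) with hb
  have fund := ZSpan.isAddFundamentalDomain' b volume
  haveI : Countable ((Submodule.span ℤ (Set.range ⇑b)).toAddSubgroup) := by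
    let f : (Fin g → ℤ) → (Submodule.span ℤ (Set.range ⇑b)) := fun c =>
      ⟨∑ i, c i • b i, Submodule.sum_mem _ fun i _ =>
        Submodule.smul_mem _ _ (Submodule.subset_span ⟨i, rfl⟩)⟩
    have hf : Function.Surjective f := by
      rintro ⟨x, hx⟩
      rw [Submodule.mem_span_range_iff_exists_fun] at hx
      obtain ⟨c, hc⟩ := hx
      exact ⟨c, Subtype.ext (by simpa [f] using hc)⟩
    exact hf.countable
  have hμF : volume (ZSpan.fundamentalDomain b) = 1 := by
    rw [ZSpan.volume_fundamentalDomain]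
    have : (Matrix.of ⇑b) = (1 : Matrix (Fin g) (Fin g) ℝ) := by
      ext i j
      simp [hb, Matrix.one_apply, Pi.basisFun_apply, Pi.single_apply, eq_comm]
    rw [this, det_one]
    simp
  have hlt : volume (ZSpan.fundamentalDomain b) * 2 ^ finrank ℝ (Fin g → ℝ) < volume s := by
    rw [hμF, one_mul, hvol, finrank_fintype_fun_eq_card, Fintype.card_fin]
    have h2 : ((2:ENNReal)) ^ g = ENNReal.ofReal ((2:ℝ) ^ g) := by
      rw [ENNReal.ofReal_pow (by norm_num)]; norm_num
    rw [h2, ENNReal.ofReal_lt_ofReal_iff (by positivity)]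
    have hrg : r ^ g = 3 ^ g * (δ / κ) := by
      rw [hrdef, mul_pow, ← Real.rpow_natCast ((δ / κ) ^ (1 / (g:ℝ))) g,
        ← Real.rpow_mul (by positivity), one_div_mul_cancel (by exact_mod_cast hg.ne'),
        Real.rpow_one]
    rw [hrg]
    rw [show δ⁻¹ * (3 ^ g * (δ / κ) * κ) = 3 ^ g * (δ⁻¹ * δ) * (κ⁻¹ * κ) by ring]
    rw [inv_mul_cancel₀ hδ.ne', inv_mul_cancel₀ hκ.ne', mul_one, mul_one]
    exact pow_lt_pow_left₀ (by norm_num) (by norm_num) hg.ne'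
  obtain ⟨x, hx0, hxs⟩ := exists_ne_zero_mem_lattice_of_measure_mul_two_pow_lt_measure
    (μ := volume) fund hsymm hconv hlt
  -- extract integer coordinates
  have hmem : (x : Fin g → ℝ) ∈ Submodule.span ℤ (Set.range b) := x.2
  rw [Basis.mem_span_iff_repr_mem] at hmem
  choose v hv using hmem
  have hvx : (fun i => (v i : ℝ)) = (x : Fin g → ℝ) := by
    funext i
    have := hv i
    simpa [hb, Pi.basisFun_repr] using this
  refine ⟨v, ?_, ?_⟩
  · intro h
    apply hx0
    have : (x : Fin g → ℝ) = 0 := by rw [← hvx, h]; funext i; simp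
    exact Subtype.ext this
  · rw [hvx]
    -- bound
    have hball : ‖L (x : Fin g → ℝ)‖ ≤ r := by
      have := hxs
      simp only [hs, Set.mem_preimage, Metric.mem_closedBall, dist_zero_right] at this
      exact this
    have hAt : Aᵀ = A := by
      have := (CFC.sqrt_nonneg Q).posSemidef.1
      rw [hAdef]; simpa [Matrix.IsHermitian, Matrix.conjTranspose_eq_transpose_of_trivial] using this
    have hnorm2 : (x : Fin g → ℝ) ⬝ᵥ Q.mulVec (x : Fin g → ℝ) = ‖L (x : Fin g → ℝ)‖ ^ 2 := by
      have h1 : ‖L (x : Fin g → ℝ)‖ = Real.sqrt (∑ i, (A.mulVec (x : Fin g → ℝ) i) ^ 2) := by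
        rw [EuclideanSpace.norm_eq]
        congr 1
        refine Finset.sum_congr rfl fun i _ => ?_
        rw [Real.norm_eq_abs, sq_abs]
        rfl
      rw [h1, Real.sq_sqrt (by positivity)]
      have h2 : ∑ i, (A.mulVec (x : Fin g → ℝ) i) ^ 2
          = (A.mulVec (x : Fin g → ℝ)) ⬝ᵥ (A.mulVec (x : Fin g → ℝ)) := by
        simp [dotProduct, sq]
      have key : (A *ᵥ (x : Fin g → ℝ)) ⬝ᵥ (A *ᵥ (x : Fin g → ℝ))
          = (x : Fin g → ℝ) ⬝ᵥ Q *ᵥ (x : Fin g → ℝ) := by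
        rw [Matrix.dotProduct_mulVec, ← Matrix.mulVec_transpose, hAt,
          Matrix.mulVec_mulVec, hAA, dotProduct_comm]
      rw [h2, key]
    have hr2 : ‖L (x : Fin g → ℝ)‖ ^ 2 ≤ r ^ 2 :=
      pow_le_pow_left₀ (norm_nonneg _) hball 2
    have hrsq : r ^ 2 = 9 * κ ^ (-(2 / (g:ℝ))) * Q.det ^ (1/(g:ℝ)) := by
      rw [hrdef, mul_pow, ← Real.rpow_natCast ((δ / κ) ^ (1 / (g:ℝ))) 2,
        ← Real.rpow_mul (by positivity)]
      have : (1 / (g:ℝ)) * (2:ℕ) = 2 / (g:ℝ) := by push_cast; ring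
      rw [this, Real.div_rpow hδ.le hκ.le, Real.rpow_neg hκ.le]
      have hδr : δ ^ (2 / (g:ℝ)) = Q.det ^ (1/(g:ℝ)) := by
        rw [← hδ2, ← Real.rpow_natCast δ 2, ← Real.rpow_mul hδ.le]
        congr 1
        push_cast; ring
      rw [hδr]
      norm_num
      ring
    calc (x : Fin g → ℝ) ⬝ᵥ Q.mulVec (x : Fin g → ℝ) = ‖L (x : Fin g → ℝ)‖ ^ 2 := hnorm2
      _ ≤ r ^ 2 := hr2
      _ = 9 * κ ^ (-(2 / (g:ℝ))) * Q.det ^ (1/(g:ℝ)) := hrsq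

lemma exists_unimodular_row (g : ℕ) (v : Fin g → ℤ) (hv : v ≠ 0) (j₀ : Fin g) :
    ∃ (W : Matrix (Fin g) (Fin g) ℤ) (d : ℤ), IsUnit W.det ∧ d ≠ 0 ∧
      ∀ i, v i = d * W j₀ i := by
  classical
  set N : Submodule ℤ (Fin g → ℤ) := Submodule.span ℤ {v} with hN
  have hvN : v ∈ N := Submodule.mem_span_singleton_self v
  obtain ⟨n, bM, bN, f, a, ha⟩ := Submodule.smithNormalForm (Pi.basisFun ℤ (Fin g)) N
  haveI : Nontrivial N := ⟨⟨v, hvN⟩, 0, by simp [Subtype.ext_iff, hv]⟩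
  have hn : n = 1 := by
    have h1 : finrank ℤ N = n := by
      rw [finrank_eq_card_basis bN, Fintype.card_fin]
    have h2 : finrank ℤ N ≤ 1 := by
      have := finrank_span_le_card (R := ℤ) ({v} : Set (Fin g → ℤ))
      simpa [hN] using this
    have h3 : 0 < finrank ℤ N := finrank_pos
    omega
  subst hn
  -- decompose v
  set x₀ : N := ⟨v, hvN⟩ with hx₀
  have hsum : (bN.repr x₀ 0) • bN 0 = x₀ := by
    have := bN.sum_repr x₀
    simpa [Fin.sum_univ_one] using this
  set c : ℤ := bN.repr x₀ 0 with hc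
  have hvc : v = (c * a 0) • (bM (f 0) : Fin g → ℤ) := by
    have h4 : (x₀ : Fin g → ℤ) = c • ((bN 0 : N) : Fin g → ℤ) := by
      rw [← hsum]; rfl
    rw [show ((x₀ : Fin g → ℤ)) = v from rfl] at h4
    rw [h4, ha 0, smul_smul]
  have hd : c * a 0 ≠ 0 := by
    intro h
    rw [h, zero_smul] at hvc
    exact hv hvc
  -- reindexed basis
  set b' : Basis (Fin g) ℤ (Fin g → ℤ) := bM.reindex (Equiv.swap (f 0) j₀) with hb'
  set W : Matrix (Fin g) (Fin g) ℤ := Matrix.of (fun i k => b' i k) with hW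
  have hWdet : IsUnit W.det := by
    have hinv : Invertible ((Pi.basisFun ℤ (Fin g)).toMatrix b') :=
      (Pi.basisFun ℤ (Fin g)).invertibleToMatrix b'
    have hWt : W = ((Pi.basisFun ℤ (Fin g)).toMatrix b')ᵀ := by
      ext i k
      simp [hW, Basis.toMatrix_apply, Pi.basisFun_repr]
    rw [hWt, Matrix.det_transpose]
    exact @Matrix.isUnit_det_of_invertible _ _ _ _ _ _ hinv
  refine ⟨W, c * a 0, hWdet, hd, fun i => ?_⟩
  have hb'j : b' j₀ = bM (f 0) := by
    rw [hb', Basis.reindex_apply, Equiv.symm_swap, Equiv.swap_apply_right]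
  rw [hvc]
  simp [hW, hb'j]

lemma leadingMinor_eq (n : ℕ) (T : Matrix (Fin (n+1)) (Fin (n+1)) ℚ) (hT : T.det ≠ 0)
    (W : Matrix (Fin (n+1)) (Fin (n+1)) ℤ) (hW : IsUnit W.det) :
    leadingMinor T (W⁻¹) =
      T.det * ((fun i => (W (Fin.last n) i : ℚ)) ⬝ᵥ
        T⁻¹.mulVec (fun i => (W (Fin.last n) i : ℚ))) := by
  classical
  set φ : ℤ →+* ℚ := Int.castRingHom ℚ with hφ
  set U : Matrix (Fin (n+1)) (Fin (n+1)) ℤ := W⁻¹ with hU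
  have hWU : W * U = 1 := Matrix.mul_nonsing_inv W hW
  have hUW : U * W = 1 := Matrix.nonsing_inv_mul W hW
  set U' : Matrix (Fin (n+1)) (Fin (n+1)) ℚ := U.map (fun z : ℤ => (z : ℚ)) with hU'
  set W' : Matrix (Fin (n+1)) (Fin (n+1)) ℚ := W.map (fun z : ℤ => (z : ℚ)) with hW'
  have hmap : ∀ M : Matrix (Fin (n+1)) (Fin (n+1)) ℤ, M.map (fun z : ℤ => (z : ℚ)) = M.map φ :=
    fun M => rfl
  have hWU' : W' * U' = 1 := by
    rw [hW', hU', hmap, hmap, ← Matrix.map_mul, hWU, Matrix.map_one φ φ.map_zero φ.map_one]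
  have hUW' : U' * W' = 1 := by
    rw [hW', hU', hmap, hmap, ← Matrix.map_mul, hUW, Matrix.map_one φ φ.map_zero φ.map_one]
  set S : Matrix (Fin (n+1)) (Fin (n+1)) ℚ := U'ᵀ * T * U' with hS
  have hU'det : U'.det * U'.det = 1 := by
    have h1 : W.det * U.det = 1 := by rw [← Matrix.det_mul, hWU, Matrix.det_one]
    have h2 : U.det = 1 ∨ U.det = -1 := by
      rcases Int.isUnit_iff.mp (IsUnit.of_mul_eq_one _ ((mul_comm _ _).trans h1)) with h | h
      · exact Or.inl h
      · exact Or.inr h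
    have h3 : U'.det = ((U.det : ℤ) : ℚ) := by
      rw [hU', hmap]
      exact (RingHom.map_det φ U).symm
    rcases h2 with h | h <;> rw [h3, h] <;> norm_num
  have hU'ne : U'.det ≠ 0 := by
    intro h
    rw [h, mul_zero] at hU'det
    exact one_ne_zero hU'det.symm
  have hSdet : S.det = T.det := by
    rw [hS, Matrix.det_mul, Matrix.det_mul, Matrix.det_transpose]
    calc U'.det * T.det * U'.det = T.det * (U'.det * U'.det) := by ring
    _ = T.det := by rw [hU'det, mul_one]
  have hSne : S.det ≠ 0 := by rw [hSdet]; exact hT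
  -- inverse of S
  have hSinv : S⁻¹ = W' * T⁻¹ * W'ᵀ := by
    apply Matrix.inv_eq_right_inv
    have e1 : U' * (W' * (T⁻¹ * W'ᵀ)) = T⁻¹ * W'ᵀ := by
      rw [← Matrix.mul_assoc U' W', hUW', Matrix.one_mul]
    have e2 : T * (T⁻¹ * W'ᵀ) = W'ᵀ := by
      rw [← Matrix.mul_assoc, Matrix.mul_nonsing_inv T (isUnit_iff_ne_zero.mpr hT),
        Matrix.one_mul]
    calc S * (W' * T⁻¹ * W'ᵀ) = U'ᵀ * (T * (U' * (W' * (T⁻¹ * W'ᵀ)))) := by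
          simp only [hS, Matrix.mul_assoc]
      _ = U'ᵀ * W'ᵀ := by rw [e1, e2]
      _ = (W' * U')ᵀ := by rw [Matrix.transpose_mul]
      _ = 1 := by rw [hWU', Matrix.transpose_one]
  -- leading minor as adjugate entry
  have hlm : leadingMinor T W⁻¹ = S.adjugate (Fin.last n) (Fin.last n) := by
    rw [Matrix.adjugate_fin_succ_eq_det_submatrix, Fin.succAbove_last]
    have hsign : ((-1 : ℚ)) ^ ((Fin.last n : ℕ) + (Fin.last n : ℕ)) = 1 :=
      Even.neg_one_pow ⟨n, rfl⟩
    rw [hsign, one_mul]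
    rfl
  have hadj : S.adjugate (Fin.last n) (Fin.last n) = S.det * S⁻¹ (Fin.last n) (Fin.last n) := by
    have := Matrix.inv_def S
    have h5 : S⁻¹ (Fin.last n) (Fin.last n)
        = (S.det)⁻¹ * S.adjugate (Fin.last n) (Fin.last n) := by
      rw [this, Ring.inverse_eq_inv']
      rfl
    rw [h5, ← mul_assoc, mul_inv_cancel₀ hSne, one_mul]
  have hentry : (W' * T⁻¹ * W'ᵀ) (Fin.last n) (Fin.last n)
      = (fun i => (W (Fin.last n) i : ℚ)) ⬝ᵥ T⁻¹.mulVec (fun i => (W (Fin.last n) i : ℚ)) := by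
    simp only [Matrix.mul_apply, Matrix.transpose_apply, Matrix.mulVec, dotProduct,
      Finset.sum_mul, Finset.mul_sum, hW', Matrix.map_apply]
    rw [Finset.sum_comm]
    apply Finset.sum_congr rfl
    intro k _
    apply Finset.sum_congr rfl
    intro j _
    ring
  rw [hlm, hadj, hSdet, hSinv, hentry]

lemma posDef_ratCast_map {g : ℕ} (T : Matrix (Fin g) (Fin g) ℚ) (hsymm : T.IsSymm)
    (hpos : ∀ x : Fin g → ℚ, x ≠ 0 → 0 < dotProduct x (T.mulVec x)) :
    (T.map (fun q : ℚ => (q : ℝ))).PosDef := by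
  classical
  set R : Matrix (Fin g) (Fin g) ℝ := T.map (fun q : ℚ => (q : ℝ)) with hR
  have hdetT : T.det ≠ 0 := by
    intro h
    obtain ⟨v, hv, hv0⟩ := (Matrix.exists_mulVec_eq_zero_iff).mpr h
    have := hpos v hv
    rw [hv0, dotProduct_zero] at this
    exact lt_irrefl 0 this
  have hdetR : R.det = ((T.det : ℚ) : ℝ) := by
    rw [hR, show T.map (fun q : ℚ => (q : ℝ)) = T.map (Rat.castHom ℝ) from rfl]
    exact (RingHom.map_det (Rat.castHom ℝ) T).symm
  have hdetRne : R.det ≠ 0 := by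
    rw [hdetR]
    exact_mod_cast hdetT
  have hherm : R.IsHermitian := by
    ext i j
    simp only [Matrix.conjTranspose_apply, hR, Matrix.map_apply, star_trivial]
    exact_mod_cast (hsymm.apply j i).symm
  -- positive semidefinite via density
  have hQval : ∀ q : Fin g → ℚ,
      ((fun i => (q i : ℝ)) ⬝ᵥ R.mulVec (fun i => (q i : ℝ)))
        = ((dotProduct q (T.mulVec q) : ℚ) : ℝ) := by
    intro q
    simp only [dotProduct, Matrix.mulVec, hR, Matrix.map_apply]
    push_cast
    rfl
  have hcont : Continuous (fun x : Fin g → ℝ => x ⬝ᵥ R.mulVec x) := by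
    have : (fun x : Fin g → ℝ => x ⬝ᵥ R.mulVec x)
        = fun x => ∑ i, x i * ∑ j, R i j * x j := rfl
    rw [this]
    refine continuous_finset_sum _ fun i _ => (continuous_apply i).mul ?_
    exact continuous_finset_sum _ fun j _ => continuous_const.mul (continuous_apply j)
  have hPSD : ∀ x : Fin g → ℝ, 0 ≤ x ⬝ᵥ R.mulVec x := by
    have hclosed : IsClosed {x : Fin g → ℝ | 0 ≤ x ⬝ᵥ R.mulVec x} :=
      isClosed_le continuous_const hcont
    have hdense : Dense (Set.range (fun q : Fin g → ℚ => (fun i => (q i : ℝ)))) := by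
      intro x
      rw [Metric.mem_closure_iff]
      intro ε hε
      have : ∀ i : Fin g, ∃ q : ℚ, |x i - (q : ℝ)| < ε / 2 := fun i =>
        exists_rat_near (x i) (by positivity)
      choose q hq using this
      refine ⟨fun i => (q i : ℝ), ⟨q, rfl⟩, ?_⟩
      rcases isEmpty_or_nonempty (Fin g) with h | h
      · simpa [Subsingleton.elim x fun i => (q i : ℝ)] using hε
      · rw [dist_pi_lt_iff hε]
        intro i
        rw [Real.dist_eq]
        calc |x i - (q i : ℝ)| < ε / 2 := hq i
          _ < ε := by linarith
    intro x
    have hx : x ∈ closure (Set.range (fun q : Fin g → ℚ => (fun i => (q i : ℝ)))) := by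
      rw [hdense.closure_eq]; trivial
    have hsub : Set.range (fun q : Fin g → ℚ => (fun i => (q i : ℝ)))
        ⊆ {x : Fin g → ℝ | 0 ≤ x ⬝ᵥ R.mulVec x} := by
      rintro _ ⟨q, rfl⟩
      simp only [Set.mem_setOf_eq, hQval q]
      by_cases hq0 : q = 0
      · subst hq0; simp [dotProduct]
      · exact_mod_cast (hpos q hq0).le
    exact hclosed.closure_subset_iff.mpr hsub hx
  refine Matrix.posDef_iff_dotProduct_mulVec.mpr ⟨hherm, fun x hx => ?_⟩
  have hstar : star x = x := by funext i; simp
  rw [hstar]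
  rcases eq_or_lt_of_le (hPSD x) with heq | hlt
  · exfalso
    have hpsd : R.PosSemidef := Matrix.posSemidef_iff_dotProduct_mulVec.mpr ⟨hherm, fun y => by rw [show star y = y by funext i; simp]; exact hPSD y⟩
    have h0 : R *ᵥ x = 0 := by
      rw [← (hpsd.dotProduct_mulVec_zero_iff x)]
      rw [hstar]
      exact heq.symm
    have : R.det = 0 := Matrix.exists_mulVec_eq_zero_iff.mp ⟨x, hx, h0⟩
    exact hdetRne this
  · exact hlt

/-- Reduction theory: there is a constant `C > 0` depending only on `g` such that
every positive definite symmetric half-integral `g×g` matrix `T` admits a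
unimodular `U ∈ GL_g(ℤ)` with `T[U]|_{g−1} ≤ C · det(2T)^{1−1/g}`, where
`T[U] = Uᵀ T U` and `T[U]|_{g−1}` is the determinant of its leading
`(g−1)×(g−1)` submatrix. In particular the minimum `m_{g−1}(T)` of `T[U]|_{g−1}`
over `U ∈ GL_g(ℤ)` satisfies `m_{g−1}(T) ≤ C · det(2T)^{1−1/g}`. -/
theorem exists_unimodular_leading_minor_bound (g : ℕ) (hg : 2 ≤ g) :
    ∃ C : ℝ, 0 < C ∧
      ∀ T : Matrix (Fin g) (Fin g) ℚ, IsPDHalfIntegral T →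
        ∃ U : Matrix (Fin g) (Fin g) ℤ, IsUnit U.det ∧
          ((leadingMinor T U : ℚ) : ℝ) ≤ C * ((((2 : ℚ) • T).det : ℝ)) ^ (1 - 1 / (g : ℝ)) := by
  classical
  obtain ⟨n, rfl⟩ : ∃ n, g = n + 1 := ⟨g - 1, by omega⟩
  set G : ℕ := n + 1 with hG
  have hGpos : 0 < G := Nat.succ_pos n
  set κ : ℝ := Real.sqrt π ^ G / Real.Gamma (G / 2 + 1) with hκdef
  have hκ : 0 < κ := by
    apply div_pos (pow_pos (Real.sqrt_pos.mpr Real.pi_pos) G)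
    exact Real.Gamma_pos_of_pos (by positivity)
  set C : ℝ := 9 * κ ^ (-(2 / (G:ℝ))) with hC
  have hCpos : 0 < C := by positivity
  refine ⟨C, hCpos, fun T hT => ?_⟩
  obtain ⟨hsymm, hpos, _, _⟩ := hT
  set R : Matrix (Fin G) (Fin G) ℝ := T.map (fun q : ℚ => (q : ℝ)) with hRdef
  have hR : R.PosDef := posDef_ratCast_map T hsymm hpos
  have hRdet : 0 < R.det := hR.det_pos
  have hdetcast : R.det = ((T.det : ℚ) : ℝ) := by
    rw [hRdef, show T.map (fun q : ℚ => (q : ℝ)) = T.map (Rat.castHom ℝ) from rfl]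
    exact (RingHom.map_det (Rat.castHom ℝ) T).symm
  have hdetT : T.det ≠ 0 := by
    intro h
    rw [h] at hdetcast
    simp only [Rat.cast_zero] at hdetcast
    exact hRdet.ne' hdetcast
  have hQ : (R⁻¹).PosDef := hR.inv
  obtain ⟨v, hv0, hvb⟩ := mink_aux G hGpos (R⁻¹) hQ
  obtain ⟨W, d, hWdet, hd0, hvd⟩ := exists_unimodular_row G v hv0 (Fin.last n)
  -- the unimodular matrix we use
  have hUdet : IsUnit (W⁻¹).det := by
    have h1 : W.det * (W⁻¹).det = 1 := by
      rw [← Matrix.det_mul, Matrix.mul_nonsing_inv W hWdet, Matrix.det_one]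
    exact IsUnit.of_mul_eq_one _ ((mul_comm _ _).trans h1)
  refine ⟨W⁻¹, hUdet, ?_⟩
  -- the key identity
  have hlm := leadingMinor_eq n T hdetT W hWdet
  set w : Fin G → ℚ := fun i => (W (Fin.last n) i : ℚ) with hw
  set w' : Fin G → ℝ := fun i => ((W (Fin.last n) i : ℤ) : ℝ) with hw'
  -- inverse commutes with cast
  have hinvmap : (T⁻¹).map (fun q : ℚ => (q : ℝ)) = R⁻¹ := by
    refine (Matrix.inv_eq_left_inv ?_).symm
    have h1 : T⁻¹ * T = 1 := Matrix.nonsing_inv_mul T (isUnit_iff_ne_zero.mpr hdetT)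
    calc (T⁻¹).map (fun q : ℚ => (q : ℝ)) * R
        = ((T⁻¹).map (Rat.castHom ℝ)) * (T.map (Rat.castHom ℝ)) := rfl
      _ = (T⁻¹ * T).map (Rat.castHom ℝ) := (Matrix.map_mul).symm
      _ = 1 := by rw [h1, Matrix.map_one _ (Rat.castHom ℝ).map_zero (Rat.castHom ℝ).map_one]
  -- cast of the identity
  have hdot : ((w ⬝ᵥ T⁻¹.mulVec w : ℚ) : ℝ) = w' ⬝ᵥ (R⁻¹).mulVec w' := by
    rw [← hinvmap]
    simp only [dotProduct, Matrix.mulVec, Matrix.map_apply, hw, hw']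
    push_cast
    rfl
  have hcast : ((leadingMinor T (W⁻¹) : ℚ) : ℝ) = R.det * (w' ⬝ᵥ (R⁻¹).mulVec w') := by
    rw [hlm, Rat.cast_mul, hdot, ← hdetcast]
  rw [hcast]
  -- compare w' with v
  have hd2 : (1:ℝ) ≤ ((d:ℝ))^2 := by
    have h1 : (1:ℤ) ≤ d^2 := by nlinarith [Int.one_le_abs hd0, sq_abs d, abs_nonneg d]
    exact_mod_cast h1
  have hvw : (fun i => ((v i : ℤ) : ℝ)) = (d:ℝ) • w' := by
    funext i
    simp only [Pi.smul_apply, smul_eq_mul, hw', hvd i]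
    push_cast
    ring
  have hsmul : ((d:ℝ) • w') ⬝ᵥ (R⁻¹).mulVec ((d:ℝ) • w')
      = ((d:ℝ))^2 * (w' ⬝ᵥ (R⁻¹).mulVec w') := by
    rw [Matrix.mulVec_smul, smul_dotProduct, dotProduct_smul]
    simp [sq, smul_eq_mul]; ring
  have hw'nonneg : 0 ≤ w' ⬝ᵥ (R⁻¹).mulVec w' := by
    have := hQ.posSemidef.dotProduct_mulVec_nonneg w'
    simpa using this
  have hwle : w' ⬝ᵥ (R⁻¹).mulVec w' ≤ C * (R⁻¹).det ^ (1/(G:ℝ)) := by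
    calc w' ⬝ᵥ (R⁻¹).mulVec w' ≤ ((d:ℝ))^2 * (w' ⬝ᵥ (R⁻¹).mulVec w') := by nlinarith
      _ = (fun i => ((v i : ℤ) : ℝ)) ⬝ᵥ (R⁻¹).mulVec (fun i => ((v i : ℤ) : ℝ)) := by
          rw [hvw, hsmul]
      _ ≤ C * (R⁻¹).det ^ (1/(G:ℝ)) := hvb
  -- final computation
  have hinvdet : (R⁻¹).det = R.det⁻¹ := by
    rw [Matrix.det_nonsing_inv, Ring.inverse_eq_inv']
  have hfinal : R.det * (C * (R⁻¹).det ^ (1/(G:ℝ))) = C * R.det ^ (1 - 1/(G:ℝ)) := by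
    rw [hinvdet, Real.inv_rpow hRdet.le, ← Real.rpow_neg hRdet.le,
      show (1 - 1/(G:ℝ)) = 1 + (-(1/(G:ℝ))) by ring, Real.rpow_add hRdet, Real.rpow_one]
    ring
  have hDle : R.det ≤ ((((2 : ℚ) • T).det : ℚ) : ℝ) := by
    have h1 : ((2 : ℚ) • T).det = 2^G * T.det := by
      rw [Matrix.det_smul, Fintype.card_fin]
    have h2 : ((((2 : ℚ) • T).det : ℚ) : ℝ) = 2^G * R.det := by
      rw [h1, hdetcast]; push_cast; ring
    have h3 : (1:ℝ) ≤ 2^G := one_le_pow₀ (by norm_num)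
    rw [h2]
    nlinarith [hRdet, h3]
  have hexp : 0 ≤ 1 - 1/(G:ℝ) := by
    have h1 : (1:ℝ) ≤ (G:ℝ) := by exact_mod_cast hGpos
    have h2 : 1/(G:ℝ) ≤ 1 := by
      rw [div_le_one (by linarith)]
      linarith
    linarith
  calc R.det * (w' ⬝ᵥ (R⁻¹).mulVec w')
      ≤ R.det * (C * (R⁻¹).det ^ (1/(G:ℝ))) := mul_le_mul_of_nonneg_left hwle hRdet.le
    _ = C * R.det ^ (1 - 1/(G:ℝ)) := hfinal
    _ ≤ C * ((((2 : ℚ) • T).det : ℚ) : ℝ) ^ (1 - 1/(G:ℝ)) :=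
        mul_le_mul_of_nonneg_left (Real.rpow_le_rpow hRdet.le hDle hexp) hCpos.le


end AuxProof
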